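/- arXiv:2605.12032 — 2 statements merged into one kernel-verified Lean document; each statement's English description precedes it below -/
import Mathlib

section
/- Let λ > 0, c, α, k > 0, and C ≥ 0 be constants, and choose ε ∈ (0,1) such that -cαkε²/(λ(1-ε²)) + C < 0. Suppose e : [t₀, t₁] → ℝ is continuously differentiable with |e(t)| < 1 for all t, e(t)·ė(t) ≤ -cαk e(t)²/(λ(1-e(t)²)) + C for all t ∈ [t₀,t₁], and |e(t)| ≥ ε on [t₀, t₁] with |e(t₀)| = ε. Then e(t₁)² ≤ ε². -/
/-!
On `[t₀, t₁]` the value `x = e(t)²` lies in `[ε², 1)`, where the rate `-cαk x / (λ(1 - x))` is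
largest at `x = ε²`; so the hypothesis on `ε` forces `e ė ≤ 0`, i.e. `e²` is antitone, and
`e(t₁)² ≤ e(t₀)² = ε²`.
-/

open Set

theorem div_one_sub_le_div_one_sub {x y : ℝ} (hxy : y ≤ x) (hx : x < 1) :
    y / (1 - y) ≤ x / (1 - x) := by
  rw [div_le_div_iff₀ (by linarith) (by linarith)]
  nlinarith

theorem neg_mul_div_mul_one_sub_le {a l x y : ℝ} (ha : 0 ≤ a) (hl : 0 ≤ l) (hxy : y ≤ x)
    (hx : x < 1) : -(a * x) / (l * (1 - x)) ≤ -(a * y) / (l * (1 - y)) := by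
  simp only [neg_div, mul_div_mul_comm]
  exact neg_le_neg (mul_le_mul_of_nonneg_left (div_one_sub_le_div_one_sub hxy hx)
    (div_nonneg ha hl))

theorem antitoneOn_sq_of_mul_deriv_nonpos {D : Set ℝ} (hD : Convex ℝ D) {f f' : ℝ → ℝ}
    (hf : ∀ x ∈ D, HasDerivAt f (f' x) x) (hff' : ∀ x ∈ D, f x * f' x ≤ 0) :
    AntitoneOn (fun x => f x ^ 2) D := by
  have hsq : ∀ x ∈ D, HasDerivAt (fun x => f x ^ 2) (2 * (f x * f' x)) x := fun x hx => by
    simpa [mul_assoc] using (hf x hx).fun_pow 2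
  exact antitoneOn_of_hasDerivWithinAt_nonpos hD
    (fun x hx => (hsq x hx).continuousAt.continuousWithinAt)
    (fun x hx => (hsq x (interior_subset hx)).hasDerivWithinAt)
    (fun x hx => mul_nonpos_of_nonneg_of_nonpos zero_le_two (hff' x (interior_subset hx)))

theorem funnel_barrier_general
    (lam c α k C ε : ℝ) (hlam : 0 < lam) (hc : 0 < c) (hα : 0 < α) (hk : 0 < k)
    (hε : ε ∈ Set.Ioo (0 : ℝ) 1)
    (hkey : -(c * α * k * ε ^ 2) / (lam * (1 - ε ^ 2)) + C < 0)
    (t₀ t₁ : ℝ) (ht : t₀ ≤ t₁)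
    (e e' : ℝ → ℝ)
    (hderiv : ∀ t ∈ Set.Icc t₀ t₁, HasDerivAt e (e' t) t)
    (hlt : ∀ t ∈ Set.Icc t₀ t₁, |e t| < 1)
    (hineq : ∀ t ∈ Set.Icc t₀ t₁,
      e t * e' t ≤ -(c * α * k * (e t) ^ 2) / (lam * (1 - (e t) ^ 2)) + C)
    (hge : ∀ t ∈ Set.Icc t₀ t₁, ε ≤ |e t|)
    (hstart : |e t₀| = ε) :
    (e t₁) ^ 2 ≤ ε ^ 2 := by
  have hdecr : ∀ t ∈ Icc t₀ t₁, e t * e' t ≤ 0 := fun t ht => by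
    have hsq_lt : e t ^ 2 < 1 := (sq_lt_one_iff_abs_lt_one _).2 (hlt t ht)
    have hsq_ge : ε ^ 2 ≤ e t ^ 2 := by
      simpa only [sq_abs] using pow_le_pow_left₀ hε.1.le (hge t ht) 2
    have hrate := neg_mul_div_mul_one_sub_le (by positivity : 0 ≤ c * α * k) hlam.le hsq_ge hsq_lt
    linarith [hineq t ht]
  calc e t₁ ^ 2 ≤ e t₀ ^ 2 :=
        antitoneOn_sq_of_mul_deriv_nonpos (convex_Icc t₀ t₁) hderiv hdecr
          (left_mem_Icc.2 ht) (right_mem_Icc.2 ht) ht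
    _ = ε ^ 2 := by rw [← sq_abs, hstart]

/-- Funnel-control barrier argument: on `[t₀,t₁]`, if `|e| ∈ [ε,1)`, `|e(t₀)| = ε`, and
`e ė ≤ -cαk e²/(λ(1-e²)) + C` with `-cαkε²/(λ(1-ε²)) + C < 0`, then `e(t₁)² ≤ ε²`. -/
theorem funnel_barrier
    (lam c α k C ε : ℝ) (hlam : 0 < lam) (hc : 0 < c) (hα : 0 < α) (hk : 0 < k)
    (hC : 0 ≤ C) (hε : ε ∈ Set.Ioo (0 : ℝ) 1)
    (hkey : -(c * α * k * ε ^ 2) / (lam * (1 - ε ^ 2)) + C < 0)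
    (t₀ t₁ : ℝ) (ht : t₀ ≤ t₁)
    (e e' : ℝ → ℝ)
    (hderiv : ∀ t ∈ Set.Icc t₀ t₁, HasDerivAt e (e' t) t)
    (hcont : ContinuousOn e' (Set.Icc t₀ t₁))
    (hlt : ∀ t ∈ Set.Icc t₀ t₁, |e t| < 1)
    (hineq : ∀ t ∈ Set.Icc t₀ t₁,
      e t * e' t ≤ -(c * α * k * (e t) ^ 2) / (lam * (1 - (e t) ^ 2)) + C)
    (hge : ∀ t ∈ Set.Icc t₀ t₁, ε ≤ |e t|)
    (hstart : |e t₀| = ε) :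
    (e t₁) ^ 2 ≤ ε ^ 2 :=
  funnel_barrier_general lam c α k C ε hlam hc hα hk hε hkey t₀ t₁ ht e e' hderiv hlt hineq hge
    hstart
end

section
/- Let ℓ > 0, X = L²([0,ℓ],ℝ)² × ℝ with weighted inner product ⟨(τ₁,L₁,L_{b1}),(τ₂,L₂,L_{b2})⟩ = ∫₀^ℓ (G τ₁τ₂ + ρ⁻¹L₁L₂) dξ + J⁻¹Γ⁻¹ L_{b1}L_{b2}, where G, ρ, J, Γ > 0 are constants. Let D be defined on the domain of triples (τ, L, L_b) with Gτ, ρ⁻¹L ∈ W^{1,2}([0,ℓ]), (ρ⁻¹L)(ℓ) = J⁻¹L_b, and (Gτ)(0) = 0, by D(τ,L,L_b) = (-(ρ⁻¹L)', -(Gτ)', Γ(Gτ)(ℓ)). Then D is skew-symmetric: ⟨x₁, Dx₂⟩ + ⟨Dx₁, x₂⟩ = 0 for all x₁, x₂ ∈ dom(D). -/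
/-!
Write `p = Gτ` and `q = ρ⁻¹L`. The integrand of `⟨x₁, Dx₂⟩ + ⟨Dx₁, x₂⟩` is then
`-(p₁q₂ + q₁p₂)'`, so the integrals reduce to boundary terms. Those at `0` vanish since
`p(0) = 0`, and those at `ℓ` cancel the `L_b`-terms because `q(ℓ) = J⁻¹L_b`.
-/

open Set MeasureTheory intervalIntegral
open scoped Interval

theorem integral_skew_deriv_pairing_add {a b : ℝ} {p₁ q₁ p₂ q₂ p₁' q₁' p₂' q₂' : ℝ → ℝ}
    (hp₁ : ∀ x ∈ [[a, b]], HasDerivAt p₁ (p₁' x) x) (hq₁ : ∀ x ∈ [[a, b]], HasDerivAt q₁ (q₁' x) x)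
    (hp₂ : ∀ x ∈ [[a, b]], HasDerivAt p₂ (p₂' x) x) (hq₂ : ∀ x ∈ [[a, b]], HasDerivAt q₂ (q₂' x) x)
    (hp₁' : IntervalIntegrable p₁' volume a b) (hq₁' : IntervalIntegrable q₁' volume a b)
    (hp₂' : IntervalIntegrable p₂' volume a b) (hq₂' : IntervalIntegrable q₂' volume a b) :
    (∫ x in a..b, p₁ x * -q₂' x + q₁ x * -p₂' x) + (∫ x in a..b, -q₁' x * p₂ x + -p₁' x * q₂ x) =
      (p₁ a * q₂ a + q₁ a * p₂ a) - (p₁ b * q₂ b + q₁ b * p₂ b) := by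
  have hf : IntervalIntegrable (fun x => p₁ x * -q₂' x + q₁ x * -p₂' x) volume a b :=
    (hq₂'.neg.continuousOn_mul (HasDerivAt.continuousOn hp₁)).add
      (hp₂'.neg.continuousOn_mul (HasDerivAt.continuousOn hq₁))
  have hg : IntervalIntegrable (fun x => -q₁' x * p₂ x + -p₁' x * q₂ x) volume a b :=
    (hq₁'.neg.mul_continuousOn (HasDerivAt.continuousOn hp₂)).add
      (hp₁'.neg.mul_continuousOn (HasDerivAt.continuousOn hq₂))
  rw [← integral_add hf hg]
  refine (integral_eq_sub_of_hasDerivAt (f := fun x => -(p₁ x * q₂ x + q₁ x * p₂ x))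
    (fun x hx => ?_) (hf.add hg)).trans (by ring)
  exact (((hp₁ x hx).mul (hq₂ x hx)).add ((hq₁ x hx).mul (hp₂ x hx))).neg.congr_deriv (by ring)

theorem drillstring_operator_skew_symmetric_general
    (ℓ G ρ J Γ : ℝ) (hΓ : 0 < Γ)
    (τ₁ τ₂ L₁ L₂ τ₁' τ₂' L₁' L₂' : ℝ → ℝ) (Lb₁ Lb₂ : ℝ)
    (hτ₁ : ∀ ξ, HasDerivAt τ₁ (τ₁' ξ) ξ) (hτ₂ : ∀ ξ, HasDerivAt τ₂ (τ₂' ξ) ξ)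
    (hL₁ : ∀ ξ, HasDerivAt L₁ (L₁' ξ) ξ) (hL₂ : ∀ ξ, HasDerivAt L₂ (L₂' ξ) ξ)
    (hτ₁' : Continuous τ₁') (hτ₂' : Continuous τ₂')
    (hL₁' : Continuous L₁') (hL₂' : Continuous L₂')
    -- boundary conditions of dom(D):
    (hbd₁ : ρ⁻¹ * L₁ ℓ = J⁻¹ * Lb₁) (hbd₂ : ρ⁻¹ * L₂ ℓ = J⁻¹ * Lb₂)
    (hb0₁ : G * τ₁ 0 = 0) (hb0₂ : G * τ₂ 0 = 0) :
    ((∫ ξ in (0:ℝ)..ℓ,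
        G * τ₁ ξ * (-(ρ⁻¹ * L₂' ξ)) + ρ⁻¹ * L₁ ξ * (-(G * τ₂' ξ)))
      + J⁻¹ * Γ⁻¹ * Lb₁ * (Γ * (G * τ₂ ℓ)))
    + ((∫ ξ in (0:ℝ)..ℓ,
        G * (-(ρ⁻¹ * L₁' ξ)) * τ₂ ξ + ρ⁻¹ * (-(G * τ₁' ξ)) * L₂ ξ)
      + J⁻¹ * Γ⁻¹ * (Γ * (G * τ₁ ℓ)) * Lb₂) = 0 := by
  have green := integral_skew_deriv_pairing_add (a := 0) (b := ℓ)
    (fun ξ _ => (hτ₁ ξ).const_mul G) (fun ξ _ => (hL₁ ξ).const_mul ρ⁻¹)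
    (fun ξ _ => (hτ₂ ξ).const_mul G) (fun ξ _ => (hL₂ ξ).const_mul ρ⁻¹)
    ((hτ₁'.const_mul G).intervalIntegrable 0 ℓ) ((hL₁'.const_mul ρ⁻¹).intervalIntegrable 0 ℓ)
    ((hτ₂'.const_mul G).intervalIntegrable 0 ℓ) ((hL₂'.const_mul ρ⁻¹).intervalIntegrable 0 ℓ)
  have hI₂ : (∫ ξ in (0:ℝ)..ℓ, G * (-(ρ⁻¹ * L₁' ξ)) * τ₂ ξ + ρ⁻¹ * (-(G * τ₁' ξ)) * L₂ ξ) =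
      ∫ ξ in (0:ℝ)..ℓ, -(ρ⁻¹ * L₁' ξ) * (G * τ₂ ξ) + -(G * τ₁' ξ) * (ρ⁻¹ * L₂ ξ) :=
    integral_congr fun ξ _ => by ring
  have hΓΓ : Γ⁻¹ * Γ = 1 := inv_mul_cancel₀ hΓ.ne'
  rw [hI₂]
  linear_combination green + ρ⁻¹ * L₂ 0 * hb0₁ + ρ⁻¹ * L₁ 0 * hb0₂
    - G * τ₂ ℓ * hbd₁ - G * τ₁ ℓ * hbd₂ + (J⁻¹ * Lb₁ * G * τ₂ ℓ + J⁻¹ * Lb₂ * G * τ₁ ℓ) * hΓΓ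

/-- Skew-symmetry of the drill-string operator
`D(τ,L,L_b) = (-(ρ⁻¹L)', -(Gτ)', Γ(Gτ)(ℓ))` on the domain with boundary conditions
`(ρ⁻¹L)(ℓ) = J⁻¹L_b` and `(Gτ)(0) = 0`, with respect to the weighted inner product
`⟨x₁,x₂⟩ = ∫₀^ℓ (Gτ₁τ₂ + ρ⁻¹L₁L₂) + J⁻¹Γ⁻¹ L_{b1}L_{b2}`:
one has `⟨x₁, Dx₂⟩ + ⟨Dx₁, x₂⟩ = 0`. -/
theorem drillstring_operator_skew_symmetric
    (ℓ G ρ J Γ : ℝ) (hℓ : 0 < ℓ) (hG : 0 < G) (hρ : 0 < ρ) (hJ : 0 < J) (hΓ : 0 < Γ)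
    (τ₁ τ₂ L₁ L₂ τ₁' τ₂' L₁' L₂' : ℝ → ℝ) (Lb₁ Lb₂ : ℝ)
    (hτ₁ : ∀ ξ, HasDerivAt τ₁ (τ₁' ξ) ξ) (hτ₂ : ∀ ξ, HasDerivAt τ₂ (τ₂' ξ) ξ)
    (hL₁ : ∀ ξ, HasDerivAt L₁ (L₁' ξ) ξ) (hL₂ : ∀ ξ, HasDerivAt L₂ (L₂' ξ) ξ)
    (hτ₁' : Continuous τ₁') (hτ₂' : Continuous τ₂')
    (hL₁' : Continuous L₁') (hL₂' : Continuous L₂')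
    -- boundary conditions of dom(D):
    (hbd₁ : ρ⁻¹ * L₁ ℓ = J⁻¹ * Lb₁) (hbd₂ : ρ⁻¹ * L₂ ℓ = J⁻¹ * Lb₂)
    (hb0₁ : G * τ₁ 0 = 0) (hb0₂ : G * τ₂ 0 = 0) :
    ((∫ ξ in (0:ℝ)..ℓ,
        G * τ₁ ξ * (-(ρ⁻¹ * L₂' ξ)) + ρ⁻¹ * L₁ ξ * (-(G * τ₂' ξ)))
      + J⁻¹ * Γ⁻¹ * Lb₁ * (Γ * (G * τ₂ ℓ)))
    + ((∫ ξ in (0:ℝ)..ℓ,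
        G * (-(ρ⁻¹ * L₁' ξ)) * τ₂ ξ + ρ⁻¹ * (-(G * τ₁' ξ)) * L₂ ξ)
      + J⁻¹ * Γ⁻¹ * (Γ * (G * τ₁ ℓ)) * Lb₂) = 0 :=
  drillstring_operator_skew_symmetric_general ℓ G ρ J Γ hΓ τ₁ τ₂ L₁ L₂ τ₁' τ₂' L₁' L₂' Lb₁ Lb₂ hτ₁
    hτ₂ hL₁ hL₂ hτ₁' hτ₂' hL₁' hL₂' hbd₁ hbd₂ hb0₁ hb0₂
end
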